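/- Corollary 3 (cancellation of thermodynamic vorticity in complex fluids): For a steady non-isentropic flow of a complex fluid with order-parameter values in ℝᵏ satisfying both the steady momentum balance ρ (Dv)v = div T with T = −p̃ I − T̄^E and the steady substructural balance div S − z = v·grad(∂_ν̇χ) − ∂_νχ, if at every point of B and for every index i one has ϑ ∂_iη − ∂_i h_c = Σ_α ∂_i( ι ( Σ_j ∂_j S_α^j − v·grad((∂_ν̇χ)_α) + (∂_νχ)_α ) ) ν^α + Σ_{α,j} ∂_i((∂_Nφ)_α^j) ∂_jν^α + ι Σ_α ∂_iν^α ( Σ_j ∂_j((∂_Nφ)_α^j) ) + ι Σ_{α,j} (∂_Nφ)_α^j ∂_j∂_iν^α, then ω × v = 0 throughout B. -/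

import Mathlib

noncomputable section

/-- Points of ℝ³. -/
abbrev V3 : Type := Fin 3 → ℝ

/-- Partial derivative ∂ᵢ of a scalar field on ℝ³. -/
def pd (i : Fin 3) (f : V3 → ℝ) (x : V3) : ℝ :=
  fderiv ℝ f x (Pi.single i 1)

/-- Cross product on ℝ³. -/
def cross (a b : V3) : V3 :=
  ![a 1 * b 2 - a 2 * b 1,
    a 2 * b 0 - a 0 * b 2,
    a 0 * b 1 - a 1 * b 0]

/-- Curl of a vector field on ℝ³. -/
def curl (u : V3 → V3) (x : V3) : V3 :=
  ![pd 1 (fun y => u y 2) x - pd 2 (fun y => u y 1) x,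
    pd 2 (fun y => u y 0) x - pd 0 (fun y => u y 2) x,
    pd 0 (fun y => u y 1) x - pd 1 (fun y => u y 0) x]

/-- A steady complex fluid on an open set `B ⊆ ℝ³` with order-parameter values
in `ℝᵏ`: smooth fields `ρ > 0` (mass density), `η` (entropy), `v` (velocity),
`ν` (order parameter), a smooth potential `φ = φ(ι, n, N, η)` and a smooth
kinetic co-energy `χ = χ(n, ṅ)`. -/
structure ComplexFluid (k : ℕ) where
  B : Set V3
  hB : IsOpen B
  ρ : V3 → ℝ
  η : V3 → ℝ
  v : V3 → V3
  ν : V3 → Fin k → ℝ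
  φ : ℝ × (Fin k → ℝ) × (Fin k → Fin 3 → ℝ) × ℝ → ℝ
  χ : (Fin k → ℝ) × (Fin k → ℝ) → ℝ
  hρ : ContDiffOn ℝ (⊤ : ℕ∞) ρ B
  hη : ContDiffOn ℝ (⊤ : ℕ∞) η B
  hv : ContDiffOn ℝ (⊤ : ℕ∞) v B
  hν : ContDiffOn ℝ (⊤ : ℕ∞) ν B
  hφ : ContDiff ℝ (⊤ : ℕ∞) φ
  hχ : ContDiff ℝ (⊤ : ℕ∞) χ
  hρpos : ∀ x ∈ B, 0 < ρ x

namespace ComplexFluid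

variable {k : ℕ} (K : ComplexFluid k)

/-- Specific volume `ι = 1/ρ`. -/
def ι (x : V3) : ℝ := (K.ρ x)⁻¹

/-- Gradient of the order parameter, components `(Dν)_α^j = ∂_jν^α`. -/
def Dν (x : V3) (α : Fin k) (j : Fin 3) : ℝ := pd j (fun y => K.ν y α) x

/-- The point `(ι(x), ν(x), Dν(x), η(x))` at which `φ` and its partial
derivatives are evaluated. -/
def pt (x : V3) : ℝ × (Fin k → ℝ) × (Fin k → Fin 3 → ℝ) × ℝ :=
  (K.ι x, K.ν x, K.Dν x, K.η x)

/-- `∂_ιφ` evaluated along the fields. -/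
def dφι (x : V3) : ℝ := fderiv ℝ K.φ (K.pt x) (1, 0, 0, 0)

/-- `(∂_νφ)_α` evaluated along the fields. -/
def dφν (x : V3) (α : Fin k) : ℝ := fderiv ℝ K.φ (K.pt x) (0, Pi.single α 1, 0, 0)

/-- `(∂_Nφ)_α^j` evaluated along the fields. -/
def dφN (x : V3) (α : Fin k) (j : Fin 3) : ℝ :=
  fderiv ℝ K.φ (K.pt x) (0, 0, Pi.single α (Pi.single j 1), 0)

/-- Temperature `ϑ = ∂_ηφ` evaluated along the fields. -/
def temp (x : V3) : ℝ := fderiv ℝ K.φ (K.pt x) (0, 0, 0, 1)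

/-- Convective rate `ν̇ = (Dν)v`. -/
def νdot (x : V3) (α : Fin k) : ℝ := ∑ j, K.Dν x α j * K.v x j

/-- `(∂_νχ)_α` evaluated along the fields. -/
def dχν (x : V3) (α : Fin k) : ℝ :=
  fderiv ℝ K.χ (K.ν x, K.νdot x) (Pi.single α 1, 0)

/-- The field `(∂_ν̇χ)_α` evaluated along the fields. -/
def dχνdot (x : V3) (α : Fin k) : ℝ :=
  fderiv ℝ K.χ (K.ν x, K.νdot x) (0, Pi.single α 1)

/-- Pressure `p̃ = −∂_ιφ`. -/
def ptil (x : V3) : ℝ := -(K.dφι x)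

/-- Microstress `S = ρ ∂_Nφ`. -/
def S (x : V3) (α : Fin k) (j : Fin 3) : ℝ := K.ρ x * K.dφN x α j

/-- Self-interaction `z = ρ ∂_νφ`. -/
def z (x : V3) (α : Fin k) : ℝ := K.ρ x * K.dφν x α

/-- Ericksen stress `(T̄^E)_{ij} = Σ_α ∂_iν^α (∂_Nφ)_α^j`. -/
def TE (x : V3) (i j : Fin 3) : ℝ := ∑ α, K.Dν x α i * K.dφN x α j

/-- Specific enthalpy `ξ_c = φ − ι ∂_ιφ − ∂_νφ·ν − ∂_Nφ·Dν`. -/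
def ξc (x : V3) : ℝ :=
  K.φ (K.pt x) - K.ι x * K.dφι x - (∑ α, K.dφν x α * K.ν x α)
    - ∑ α, ∑ j, K.dφN x α j * K.Dν x α j

/-- Total enthalpy `h_c = (1/2)|v|² + ξ_c`. -/
def hc (x : V3) : ℝ := (1 / 2) * (∑ i, (K.v x i) ^ 2) + K.ξc x

/-- Steady momentum balance `ρ (Dv)v = div T` with `T = −p̃ I − T̄^E`
(stated componentwise). -/
def MomentumBalance : Prop :=
  ∀ x ∈ K.B, ∀ i : Fin 3,
    K.ρ x * ∑ j, pd j (fun y => K.v y i) x * K.v x j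
      = ∑ j, pd j (fun y => -(K.ptil y) * (if i = j then (1:ℝ) else 0) - K.TE y i j) x

/-- Steady substructural balance `div S − z = v·grad(∂_ν̇χ) − ∂_νχ`
(stated componentwise on the order-parameter index). -/
def SubstructuralBalance : Prop :=
  ∀ x ∈ K.B, ∀ α : Fin k,
    (∑ j, pd j (fun y => K.S y α j) x) - K.z x α
      = (∑ j, K.v x j * pd j (fun y => K.dχνdot y α) x) - K.dχν x α

end ComplexFluid

/-! By the Lamb identity, `ω × v = (Dv)v − grad(|v|²/2)`. Dividing the momentum balance by `ρ`
expresses `(Dv)v` through `grad(∂_ιφ)` and the divergence of the Ericksen stress. The chain rule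
for `φ(ι, ν, Dν, η)` gives the Gibbs–Duhem type relation
`∂_i ξ_c = ϑ ∂_iη − ι ∂_i(∂_ιφ) − ν·∂_i(∂_νφ) − Dν·∂_i(∂_Nφ)`, and the substructural balance says
that `ι (div S − v·grad(∂_ν̇χ) + ∂_νχ) = ι z = ∂_νφ` on `B`. Substituting these into the
hypothesis on `ϑ grad η − grad h_c` leaves exactly `(Dv)v − grad(|v|²/2) = 0`. -/

open Filter Topology

section PartialDerivative

variable {f g : V3 → ℝ} {x : V3}

lemma pd_congr_of_eventuallyEq (h : f =ᶠ[𝓝 x] g) (i : Fin 3) : pd i f x = pd i g x := by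
  rw [pd, pd, h.fderiv_eq]

lemma pd_add (hf : DifferentiableAt ℝ f x) (hg : DifferentiableAt ℝ g x) (i : Fin 3) :
    pd i (fun y => f y + g y) x = pd i f x + pd i g x := by
  simp [pd, fderiv_fun_add hf hg]

lemma pd_sub (hf : DifferentiableAt ℝ f x) (hg : DifferentiableAt ℝ g x) (i : Fin 3) :
    pd i (fun y => f y - g y) x = pd i f x - pd i g x := by
  simp [pd, fderiv_fun_sub hf hg]

lemma pd_mul (hf : DifferentiableAt ℝ f x) (hg : DifferentiableAt ℝ g x) (i : Fin 3) :
    pd i (fun y => f y * g y) x = pd i f x * g x + f x * pd i g x := by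
  simp [pd, fderiv_fun_mul hf hg]
  ring

lemma pd_const_mul (hf : DifferentiableAt ℝ f x) (c : ℝ) (i : Fin 3) :
    pd i (fun y => c * f y) x = c * pd i f x := by
  simp [pd, fderiv_const_mul hf]

lemma pd_sum {A : Type*} [Fintype A] {F : A → V3 → ℝ} (hF : ∀ a, DifferentiableAt ℝ (F a) x)
    (i : Fin 3) : pd i (fun y => ∑ a, F a y) x = ∑ a, pd i (F a) x := by
  simp [pd, fderiv_fun_sum fun a _ => hF a]

lemma pd_sum_mul {A : Type*} [Fintype A] {F G : A → V3 → ℝ}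
    (hF : ∀ a, DifferentiableAt ℝ (F a) x) (hG : ∀ a, DifferentiableAt ℝ (G a) x) (i : Fin 3) :
    pd i (fun y => ∑ a, F a y * G a y) x = ∑ a, (pd i (F a) x * G a x + F a x * pd i (G a) x) := by
  rw [pd_sum (F := fun a y => F a y * G a y) fun a => (hF a).mul (hG a)]
  exact Finset.sum_congr rfl fun a _ => pd_mul (hF a) (hG a) i

end PartialDerivative

lemma cross_curl_apply (u : V3 → V3) (x : V3) (i : Fin 3) :
    cross (curl u x) (u x) i
      = ∑ j, pd j (fun y => u y i) x * u x j - ∑ j, u x j * pd i (fun y => u y j) x := by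
  fin_cases i <;> simp [cross, curl, Fin.sum_univ_three] <;> ring

lemma ContinuousLinearMap.apply_prod_pi_eq_sum {A B : Type*} [Fintype A] [Fintype B]
    [DecidableEq A] [DecidableEq B] (L : ℝ × (A → ℝ) × (A → B → ℝ) × ℝ →L[ℝ] ℝ)
    (a : ℝ) (b : A → ℝ) (c : A → B → ℝ) (d : ℝ) :
    L (a, b, c, d) = a * L (1, 0, 0, 0) + ∑ α, b α * L (0, Pi.single α 1, 0, 0)
      + ∑ α, ∑ j, c α j * L (0, 0, Pi.single α (Pi.single j 1), 0) + d * L (0, 0, 0, 1) := by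
  have hb : b = ∑ α, b α • Pi.single α 1 := pi_eq_sum_univ' b
  have hc : c = ∑ α, ∑ j, c α j • Pi.single α (Pi.single j 1) := by
    ext α j
    simp [Finset.sum_apply, Pi.single_apply, ite_apply]
  have hsplit : ((a, b, c, d) : ℝ × (A → ℝ) × (A → B → ℝ) × ℝ)
      = a • (1, 0, 0, 0) + ∑ α, b α • (0, Pi.single α 1, 0, 0)
        + ∑ α, ∑ j, c α j • (0, 0, Pi.single α (Pi.single j 1), 0) + d • (0, 0, 0, 1) := by
    refine Prod.ext ?_ (Prod.ext ?_ (Prod.ext ?_ ?_)) <;>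
      simp [Prod.fst_sum, Prod.snd_sum, ← hb, ← hc]
  rw [hsplit]
  simp only [map_add, map_sum, map_smul, smul_eq_mul]

namespace ComplexFluid

variable {k : ℕ} (K : ComplexFluid k) {x : V3}

lemma contDiffAt_ν (hx : x ∈ K.B) (α : Fin k) : ContDiffAt ℝ (⊤ : ℕ∞) (fun y => K.ν y α) x :=
  contDiffAt_pi.1 (K.hν.contDiffAt (K.hB.mem_nhds hx)) α

lemma contDiffAt_ι (hx : x ∈ K.B) : ContDiffAt ℝ (⊤ : ℕ∞) K.ι x :=
  (K.hρ.contDiffAt (K.hB.mem_nhds hx)).inv (K.hρpos x hx).ne'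

lemma contDiffAt_Dν (hx : x ∈ K.B) (α : Fin k) (j : Fin 3) :
    ContDiffAt ℝ (⊤ : ℕ∞) (fun y => K.Dν y α j) x :=
  ((K.contDiffAt_ν hx α).fderiv_right le_rfl).clm_apply contDiffAt_const

lemma contDiffAt_pt (hx : x ∈ K.B) : ContDiffAt ℝ (⊤ : ℕ∞) K.pt x :=
  (K.contDiffAt_ι hx).prodMk <| (contDiffAt_pi.2 (K.contDiffAt_ν hx)).prodMk <|
    (contDiffAt_pi.2 fun α => contDiffAt_pi.2 (K.contDiffAt_Dν hx α)).prodMk <|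
      K.hη.contDiffAt (K.hB.mem_nhds hx)

lemma contDiffAt_fderiv_φ_pt (hx : x ∈ K.B) (e : ℝ × (Fin k → ℝ) × (Fin k → Fin 3 → ℝ) × ℝ) :
    ContDiffAt ℝ (⊤ : ℕ∞) (fun y => fderiv ℝ K.φ (K.pt y) e) x :=
  ((K.hφ.fderiv_right le_rfl).contDiffAt.comp x (K.contDiffAt_pt hx)).clm_apply contDiffAt_const

lemma differentiableAt_v (hx : x ∈ K.B) (j : Fin 3) : DifferentiableAt ℝ (fun y => K.v y j) x :=
  differentiableAt_pi.1 ((K.hv.differentiableOn (by simp)).differentiableAt (K.hB.mem_nhds hx)) j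

lemma differentiableAt_η (hx : x ∈ K.B) : DifferentiableAt ℝ K.η x :=
  (K.hη.differentiableOn (by simp)).differentiableAt (K.hB.mem_nhds hx)

lemma differentiableAt_ν (hx : x ∈ K.B) (α : Fin k) : DifferentiableAt ℝ (fun y => K.ν y α) x :=
  (K.contDiffAt_ν hx α).differentiableAt (by simp)

lemma differentiableAt_ι (hx : x ∈ K.B) : DifferentiableAt ℝ K.ι x :=
  (K.contDiffAt_ι hx).differentiableAt (by simp)

lemma differentiableAt_Dν (hx : x ∈ K.B) (α : Fin k) (j : Fin 3) :
    DifferentiableAt ℝ (fun y => K.Dν y α j) x :=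
  (K.contDiffAt_Dν hx α j).differentiableAt (by simp)

lemma differentiableAt_φ_pt (hx : x ∈ K.B) : DifferentiableAt ℝ (fun y => K.φ (K.pt y)) x :=
  (K.hφ.contDiffAt.comp x (K.contDiffAt_pt hx)).differentiableAt (by simp)

lemma differentiableAt_dφι (hx : x ∈ K.B) : DifferentiableAt ℝ K.dφι x :=
  (K.contDiffAt_fderiv_φ_pt hx _).differentiableAt (by simp)

lemma differentiableAt_dφν (hx : x ∈ K.B) (α : Fin k) :
    DifferentiableAt ℝ (fun y => K.dφν y α) x :=
  (K.contDiffAt_fderiv_φ_pt hx _).differentiableAt (by simp)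

lemma differentiableAt_dφN (hx : x ∈ K.B) (α : Fin k) (j : Fin 3) :
    DifferentiableAt ℝ (fun y => K.dφN y α j) x :=
  (K.contDiffAt_fderiv_φ_pt hx _).differentiableAt (by simp)

lemma pd_φ_pt (hx : x ∈ K.B) (i : Fin 3) :
    pd i (fun y => K.φ (K.pt y)) x
      = pd i K.ι x * K.dφι x + ∑ α, pd i (fun y => K.ν y α) x * K.dφν x α
        + ∑ α, ∑ j, pd i (fun y => K.Dν y α j) x * K.dφN x α j + pd i K.η x * K.temp x := by
  have hpt : HasFDerivAt K.pt ((fderiv ℝ K.ι x).prod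
      ((ContinuousLinearMap.pi fun α => fderiv ℝ (fun y => K.ν y α) x).prod
        ((ContinuousLinearMap.pi fun α => ContinuousLinearMap.pi fun j =>
          fderiv ℝ (fun y => K.Dν y α j) x).prod (fderiv ℝ K.η x)))) x :=
    (K.differentiableAt_ι hx).hasFDerivAt.prodMk <|
      (hasFDerivAt_pi.2 fun α => (K.differentiableAt_ν hx α).hasFDerivAt).prodMk <|
        (hasFDerivAt_pi.2 fun α => hasFDerivAt_pi.2 fun j =>
          (K.differentiableAt_Dν hx α j).hasFDerivAt).prodMk (K.differentiableAt_η hx).hasFDerivAt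
  have hφpt : HasFDerivAt (fun y => K.φ (K.pt y)) ((fderiv ℝ K.φ (K.pt x)).comp _) x :=
    (K.hφ.differentiable (by simp) (K.pt x)).hasFDerivAt.comp x hpt
  rw [pd, hφpt.fderiv]
  exact ContinuousLinearMap.apply_prod_pi_eq_sum _ _ _ _ _

lemma differentiableAt_ξc (hx : x ∈ K.B) : DifferentiableAt ℝ K.ξc x := by
  have := K.differentiableAt_φ_pt hx
  have := K.differentiableAt_ι hx
  have := K.differentiableAt_dφι hx
  have := K.differentiableAt_dφν hx
  have := K.differentiableAt_ν hx
  have := K.differentiableAt_dφN hx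
  have := K.differentiableAt_Dν hx
  unfold ξc
  fun_prop

lemma pd_ξc (hx : x ∈ K.B) (i : Fin 3) :
    pd i K.ξc x
      = K.temp x * pd i K.η x - K.ι x * pd i K.dφι x
        - ∑ α, pd i (fun y => K.dφν y α) x * K.ν x α
        - ∑ α, ∑ j, pd i (fun y => K.dφN y α j) x * K.Dν x α j := by
  have hNN : pd i (fun y => ∑ α, ∑ j, K.dφN y α j * K.Dν y α j) x
      = ∑ α, ∑ j, (pd i (fun y => K.dφN y α j) x * K.Dν x α j
        + K.dφN x α j * pd i (fun y => K.Dν y α j) x) := by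
    rw [pd_sum fun α => .fun_sum fun j _ =>
      (K.differentiableAt_dφN hx α j).fun_mul (K.differentiableAt_Dν hx α j)]
    exact Finset.sum_congr rfl fun α _ =>
      pd_sum_mul (K.differentiableAt_dφN hx α) (K.differentiableAt_Dν hx α) i
  have := K.differentiableAt_φ_pt hx
  have := K.differentiableAt_ι hx
  have := K.differentiableAt_dφι hx
  have := K.differentiableAt_dφν hx
  have := K.differentiableAt_ν hx
  have := K.differentiableAt_dφN hx
  have := K.differentiableAt_Dν hx
  unfold ξc
  rw [pd_sub, pd_sub, pd_sub, pd_mul (K.differentiableAt_ι hx) (K.differentiableAt_dφι hx),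
    pd_sum_mul (K.differentiableAt_dφν hx) (K.differentiableAt_ν hx), hNN, K.pd_φ_pt hx]
  · simp only [Finset.sum_add_distrib, mul_comm (K.dφν x _), mul_comm (K.dφN x _ _)]
    ring
  all_goals fun_prop

lemma pd_hc (hx : x ∈ K.B) (i : Fin 3) :
    pd i K.hc x = ∑ j, K.v x j * pd i (fun y => K.v y j) x + pd i K.ξc x := by
  have hv := K.differentiableAt_v hx
  have hvv : DifferentiableAt ℝ (fun y => ∑ j, K.v y j * K.v y j) x := by fun_prop
  have hhc : K.hc = fun y => (1 / 2 : ℝ) * ∑ j, K.v y j * K.v y j + K.ξc y := by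
    funext y
    simp only [hc, sq]
  rw [hhc, pd_add (by fun_prop) (K.differentiableAt_ξc hx), pd_const_mul hvv,
    pd_sum_mul hv hv, Finset.mul_sum]
  congr 1
  exact Finset.sum_congr rfl fun j _ => by ring

lemma sum_pd_stress (hx : x ∈ K.B) (i : Fin 3) :
    ∑ j, pd j (fun y => -K.ptil y * (if i = j then (1 : ℝ) else 0) - K.TE y i j) x
      = pd i K.dφι x
        - (∑ α, K.Dν x α i * ∑ j, pd j (fun y => K.dφN y α j) x
          + ∑ α, ∑ j, K.dφN x α j * pd j (fun y => K.Dν y α i) x) := by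
  have hdφι := K.differentiableAt_dφι hx
  have hDν := fun α => K.differentiableAt_Dν hx α i
  have hdφN := K.differentiableAt_dφN hx
  have hpressure (j : Fin 3) : (fun y => -K.ptil y * (if i = j then (1 : ℝ) else 0))
      = fun y => (if i = j then (1 : ℝ) else 0) * K.dφι y := by
    funext y
    simp only [ptil, neg_neg, mul_comm]
  have hterm (j : Fin 3) :
      pd j (fun y => -K.ptil y * (if i = j then (1 : ℝ) else 0) - K.TE y i j) x
        = (if i = j then (1 : ℝ) else 0) * pd j K.dφι x
          - ∑ α, (pd j (fun y => K.Dν y α i) x * K.dφN x α j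
            + K.Dν x α i * pd j (fun y => K.dφN y α j) x) := by
    have hTE : DifferentiableAt ℝ (fun y => K.TE y i j) x := by unfold TE; fun_prop
    rw [pd_sub (by rw [hpressure]; fun_prop) hTE, hpressure, pd_const_mul hdφι]
    exact congrArg _ (pd_sum_mul hDν (fun α => hdφN α j) j)
  simp only [hterm, Finset.sum_sub_distrib, ite_mul, one_mul, zero_mul, Finset.sum_ite_eq,
    Finset.mem_univ, if_true]
  rw [Finset.sum_comm]
  simp only [Finset.sum_add_distrib, Finset.mul_sum]
  rw [add_comm (∑ α, ∑ j, pd j _ x * _)]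
  simp only [mul_comm (pd _ _ x) (K.dφN x _ _)]

lemma ι_mul_substructural_eq_dφν (hsub : K.SubstructuralBalance) {y : V3} (hy : y ∈ K.B)
    (α : Fin k) :
    K.ι y * (∑ j, pd j (fun w => K.S w α j) y
        - ∑ j, K.v y j * pd j (fun w => K.dχνdot w α) y + K.dχν y α) = K.dφν y α := by
  rw [show ∑ j, pd j (fun w => K.S w α j) y - ∑ j, K.v y j * pd j (fun w => K.dχνdot w α) y
      + K.dχν y α = K.z y α by linarith [hsub y hy α]]
  rw [z, ι, inv_mul_cancel_left₀ (K.hρpos y hy).ne']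

lemma pd_ι_mul_substructural (hsub : K.SubstructuralBalance) (hx : x ∈ K.B) (α : Fin k)
    (i : Fin 3) :
    pd i (fun y => K.ι y * (∑ j, pd j (fun w => K.S w α j) y
        - ∑ j, K.v y j * pd j (fun w => K.dχνdot w α) y + K.dχν y α)) x
      = pd i (fun y => K.dφν y α) x :=
  pd_congr_of_eventuallyEq (eventually_of_mem (K.hB.mem_nhds hx) fun _ hy =>
    K.ι_mul_substructural_eq_dφν hsub hy α) i

end ComplexFluid

/-- Corollary 3, cancellation of thermodynamic vorticity in
complex fluids: under the steady momentum and substructural balances, if at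
every point of `B` and for every index `i` one has
`ϑ ∂_iη − ∂_i h_c = Σ_α ∂_i( ι ( Σ_j ∂_j S_α^j − v·grad((∂_ν̇χ)_α) + (∂_νχ)_α ) ) ν^α`
`  + Σ_{α,j} ∂_i((∂_Nφ)_α^j) ∂_jν^α + ι Σ_α ∂_iν^α ( Σ_j ∂_j((∂_Nφ)_α^j) )`
`  + ι Σ_{α,j} (∂_Nφ)_α^j ∂_j∂_iν^α`, then `ω × v = 0` throughout `B`. -/
theorem complexFluid_cancellation_of_vorticity
    {k : ℕ} (K : ComplexFluid k)
    (hbal : K.MomentumBalance) (hsub : K.SubstructuralBalance)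
    (hcancel : ∀ x ∈ K.B, ∀ i : Fin 3,
      K.temp x * pd i K.η x - pd i K.hc x
        = (∑ α, pd i (fun y => K.ι y *
              ((∑ j, pd j (fun w => K.S w α j) y)
                - (∑ j, K.v y j * pd j (fun w => K.dχνdot w α) y)
                + K.dχν y α)) x * K.ν x α)
          + (∑ α, ∑ j, pd i (fun y => K.dφN y α j) x * K.Dν x α j)
          + K.ι x * (∑ α, K.Dν x α i * (∑ j, pd j (fun y => K.dφN y α j) x))
          + K.ι x * ∑ α, ∑ j, K.dφN x α j * pd j (fun y => K.Dν y α i) x) :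
    ∀ x ∈ K.B, ∀ i : Fin 3, cross (curl K.v x) (K.v x) i = 0 := by
  intro x hx i
  have hmomentum : ∑ j, pd j (fun y => K.v y i) x * K.v x j
      = K.ι x * ∑ j, pd j (fun y => -K.ptil y * (if i = j then (1 : ℝ) else 0)
          - K.TE y i j) x := by
    rw [← hbal x hx i, ComplexFluid.ι, inv_mul_cancel_left₀ (K.hρpos x hx).ne']
  have hsubstructural := Finset.sum_congr rfl fun α (_ : α ∈ Finset.univ) =>
    congrArg (· * K.ν x α) (K.pd_ι_mul_substructural hsub hx α i)
  rw [cross_curl_apply, hmomentum, K.sum_pd_stress hx i]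
  linear_combination K.pd_hc hx i + K.pd_ξc hx i + hcancel x hx i + hsubstructural
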